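/- arXiv:gr-qc/0305062 — 2 statements merged into one kernel-verified Lean document; each statement's English description precedes it below -/
import Mathlib

section
/- Along any solution of the system ṙ = -(1/γ)rH, Ḣ = b·r² - H² with r > 0, the function I(r,H) = -(1/(2γ))·r^(−2γ)·(b·r²/(1 − 1/γ) − H²) is a first integral: its derivative along the flow vanishes, i.e. (∂I/∂r)·(-(1/γ)rH) + (∂I/∂H)·(b·r² − H²) = 0. -/
/-!
Write `I = c · r^p · (A r² - H²)` with `c = -1/(2γ)`, `p = -2γ`, `A = b/(1 - 1/γ)`.
Along the flow, the `r`-derivative of the weight `r^p` contributes `-(p/γ) = 2` times the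
quadratic factor, and the remaining terms cancel exactly because `A (1 - 1/γ) = b`.
-/

lemma hasDerivAt_rpow_mul_quadratic_fst {r : ℝ} (hr : r ≠ 0) (c p A H : ℝ) :
    HasDerivAt (fun s => c * s ^ p * (A * s ^ 2 - H ^ 2))
      (c * (p * r ^ (p - 1) * (A * r ^ 2 - H ^ 2) + r ^ p * (2 * A * r))) r := by
  have hquad : HasDerivAt (fun s : ℝ => A * s ^ 2 - H ^ 2) (2 * A * r) r := by
    simpa [mul_comm, mul_left_comm] using ((hasDerivAt_pow 2 r).const_mul A).sub_const (H ^ 2)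
  simpa [mul_assoc] using ((Real.hasDerivAt_rpow_const (Or.inl hr)).mul hquad).const_mul c

lemma hasDerivAt_rpow_mul_quadratic_snd (c p A r H : ℝ) :
    HasDerivAt (fun K => c * r ^ p * (A * r ^ 2 - K ^ 2)) (c * r ^ p * -(2 * H)) H := by
  simpa using ((hasDerivAt_pow 2 H).const_sub (A * r ^ 2)).const_mul (c * r ^ p)

lemma rpow_quadratic_flow_derivative_eq_zero {γ A b r : ℝ} (hγ : γ ≠ 0) (hr : r ≠ 0)
    (hA : A * (1 - 1 / γ) = b) (c H : ℝ) :
    c * (-2 * γ * r ^ (-2 * γ - 1) * (A * r ^ 2 - H ^ 2) + r ^ (-2 * γ) * (2 * A * r)) *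
        (-(1 / γ) * r * H) +
      c * r ^ (-2 * γ) * -(2 * H) * (b * r ^ 2 - H ^ 2) = 0 := by
  rw [Real.rpow_sub_one hr, ← hA]
  field_simp
  ring

theorem first_integral_general (γ b : ℝ) (hγ0 : γ ≠ 0) (hγ1 : γ ≠ 1)
    (I : ℝ → ℝ → ℝ)
    (hI : ∀ r H : ℝ, I r H =
      -(1 / (2 * γ)) * r ^ (-(2 : ℝ) * γ) * (b * r ^ 2 / (1 - 1 / γ) - H ^ 2))
    (r H : ℝ) (hr : 0 < r) :
    deriv (fun s => I s H) r * (-(1 / γ) * r * H) +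
      deriv (fun K => I r K) H * (b * r ^ 2 - H ^ 2) = 0 := by
  have hd : 1 - 1 / γ ≠ 0 := by
    rw [one_sub_div hγ0]
    exact div_ne_zero (sub_ne_zero.mpr hγ1) hγ0
  set A := b / (1 - 1 / γ)
  have hI' : ∀ r H, I r H = -(1 / (2 * γ)) * r ^ (-2 * γ) * (A * r ^ 2 - H ^ 2) := by
    intro r H
    rw [hI, div_mul_eq_mul_div]
  simp only [hI']
  rw [(hasDerivAt_rpow_mul_quadratic_fst hr.ne' _ _ _ _).deriv,
    (hasDerivAt_rpow_mul_quadratic_snd _ _ _ _ _).deriv]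
  exact rpow_quadratic_flow_derivative_eq_zero hγ0 hr.ne' (div_mul_cancel₀ b hd) _ _

/-- `I(r,H) = -(1/(2γ)) r^(-2γ) (b r²/(1-1/γ) - H²)` is a first integral of
`ṙ = -(1/γ)rH`, `Ḣ = b r² - H²` on `{r > 0}`:
its derivative along the flow vanishes. -/
theorem first_integral (γ b : ℝ) (hγ0 : γ ≠ 0) (hγ1 : γ ≠ 1)
    (hb : b = 1 ∨ b = -1)
    (I : ℝ → ℝ → ℝ)
    (hI : ∀ r H : ℝ, I r H =
      -(1 / (2 * γ)) * r ^ (-(2 : ℝ) * γ) * (b * r ^ 2 / (1 - 1 / γ) - H ^ 2))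
    (r H : ℝ) (hr : 0 < r) :
    deriv (fun s => I s H) r * (-(1 / γ) * r * H) +
      deriv (fun K => I r K) H * (b * r ^ 2 - H ^ 2) = 0 :=
  first_integral_general γ b hγ0 hγ1 I hI r H hr
end

section
/- If (r(t), H(t)) is a solution of ṙ = -(3/2)rH, Ḣ = -r² - H² defined for all t ≥ 0 with r(0) > 0 and H(0) > √2·r(0), then (r(t), H(t)) → (0,0) as t → ∞. -/
/-!
Both `r` and `H - √2 r` satisfy scalar linear equations `x' = a(t) x` along the flow
(`a = -(3/2)H` and `a = r/√2 - H` respectively), so by uniqueness of solutions neither can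
reach zero: the solution stays in the region `0 < √2 r < H`. There `Ḣ ≤ -H²`, so comparison
with the Riccati equation gives `H t ≤ (H 0⁻¹ + t)⁻¹ → 0`, and `r` is squeezed between `0`
and `H / √2`.
-/

open Set Filter Topology

section LinearODE

variable {x a : ℝ → ℝ} {t₀ : ℝ}

theorem eqOn_zero_of_hasDerivAt_mul_of_eq_zero {t₁ : ℝ}
    (hx : ∀ t ∈ Icc t₀ t₁, HasDerivAt x (a t * x t) t) (ha : ContinuousOn a (Icc t₀ t₁))
    (h₁ : x t₁ = 0) : EqOn x 0 (Icc t₀ t₁) := by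
  obtain ⟨C, hC⟩ := isCompact_Icc.exists_bound_of_continuousOn ha
  have hlip : ∀ t ∈ Ioc t₀ t₁, LipschitzOnWith C.toNNReal (a t * ·) univ := fun t ht =>
    ((lipschitzWith_smul (a t)).weaken
      (by rw [← NNReal.coe_le_coe, coe_nnnorm, Real.coe_toNNReal']
          exact (hC t (Ioc_subset_Icc_self ht)).trans (le_max_left _ _))).lipschitzOnWith
  exact ODE_solution_unique_of_mem_Icc_left hlip (HasDerivAt.continuousOn hx)
    (fun t ht => (hx t (Ioc_subset_Icc_self ht)).hasDerivWithinAt) (fun _ _ => mem_univ _)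
    continuousOn_const
    (fun t _ => by rw [Pi.zero_apply, mul_zero]; exact hasDerivWithinAt_const t _ 0)
    (fun _ _ => mem_univ _) h₁

theorem pos_of_hasDerivAt_mul (hx : ∀ t ∈ Ici t₀, HasDerivAt x (a t * x t) t)
    (ha : ContinuousOn a (Ici t₀)) (h₀ : 0 < x t₀) : ∀ t ∈ Ici t₀, 0 < x t := by
  intro t ht
  by_contra! hxt
  obtain ⟨c, hc, hxc⟩ : (0 : ℝ) ∈ x '' Icc t₀ t :=
    intermediate_value_Icc' ht ((HasDerivAt.continuousOn hx).mono Icc_subset_Ici_self)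
      ⟨hxt, h₀.le⟩
  have hsub : Icc t₀ c ⊆ Ici t₀ := Icc_subset_Ici_self
  have hx₀ : x t₀ = 0 := eqOn_zero_of_hasDerivAt_mul_of_eq_zero (fun s hs => hx s (hsub hs))
    (ha.mono hsub) hxc (left_mem_Icc.2 hc.1)
  exact h₀.ne' hx₀

end LinearODE

theorem le_inv_of_hasDerivAt_le_neg_sq {H H' : ℝ → ℝ} {t₀ : ℝ}
    (hH : ∀ t ∈ Ici t₀, HasDerivAt H (H' t) t) (hH' : ∀ t ∈ Ici t₀, H' t ≤ -H t ^ 2)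
    (hpos : ∀ t ∈ Ici t₀, 0 < H t) :
    ∀ t ∈ Ici t₀, H t ≤ ((H t₀)⁻¹ + (t - t₀))⁻¹ := by
  have hderiv : ∀ t ∈ Ici t₀, HasDerivAt (fun s => s - (H s)⁻¹) (1 - -H' t / H t ^ 2) t :=
    fun t ht => (hasDerivAt_id t).sub ((hH t ht).inv (hpos t ht).ne')
  have hanti : AntitoneOn (fun s => s - (H s)⁻¹) (Ici t₀) := by
    refine antitoneOn_of_hasDerivWithinAt_nonpos (f' := fun t => 1 - -H' t / H t ^ 2)
      (convex_Ici t₀) (HasDerivAt.continuousOn hderiv) (fun t ht => ?_) (fun t ht => ?_)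
    · exact (hderiv t (interior_subset ht)).hasDerivWithinAt
    · have ht' := interior_subset ht
      have hsq : 0 < H t ^ 2 := pow_pos (hpos t ht') 2
      rw [sub_nonpos, le_div_iff₀ hsq]
      linarith [hH' t ht']
  intro t ht
  have hmono := hanti self_mem_Ici ht ht
  have hinv : (H t₀)⁻¹ + (t - t₀) ≤ (H t)⁻¹ := by simp only at hmono; linarith
  calc H t = ((H t)⁻¹)⁻¹ := (inv_inv _).symm
    _ ≤ ((H t₀)⁻¹ + (t - t₀))⁻¹ :=
      inv_anti₀ (add_pos_of_pos_of_nonneg (inv_pos.2 (hpos t₀ self_mem_Ici)) (sub_nonneg.2 ht))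
        hinv

theorem tendsto_zero_of_hasDerivAt_le_neg_sq {H H' : ℝ → ℝ} {t₀ : ℝ}
    (hH : ∀ t ∈ Ici t₀, HasDerivAt H (H' t) t) (hH' : ∀ t ∈ Ici t₀, H' t ≤ -H t ^ 2)
    (hpos : ∀ t ∈ Ici t₀, 0 < H t) : Tendsto H atTop (𝓝 0) := by
  have hbound : Tendsto (fun t => ((H t₀)⁻¹ + (t - t₀))⁻¹) atTop (𝓝 0) :=
    tendsto_inv_atTop_zero.comp <| tendsto_atTop_add_const_left _ _ <|
      tendsto_atTop_add_const_right _ _ tendsto_id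
  refine tendsto_of_tendsto_of_tendsto_of_le_of_le' tendsto_const_nhds hbound ?_ ?_
  · filter_upwards [eventually_ge_atTop t₀] with t ht using (hpos t ht).le
  · filter_upwards [eventually_ge_atTop t₀] with t ht
      using le_inv_of_hasDerivAt_le_neg_sq hH hH' hpos t ht

section Solution

variable {r H : ℝ → ℝ}
  (hr : ∀ t ∈ Ici (0 : ℝ), HasDerivAt r (-(3 / 2) * r t * H t) t)
  (hH : ∀ t ∈ Ici (0 : ℝ), HasDerivAt H (-(r t) ^ 2 - (H t) ^ 2) t)
include hr hH

theorem solution_r_pos (hr0 : 0 < r 0) : ∀ t ∈ Ici (0 : ℝ), 0 < r t :=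
  pos_of_hasDerivAt_mul (a := fun t => -(3 / 2) * H t)
    (fun t ht => (hr t ht).congr_deriv (by ring))
    (continuousOn_const.mul (HasDerivAt.continuousOn hH)) hr0

theorem solution_sqrt_two_mul_r_lt_H (hH0 : √2 * r 0 < H 0) :
    ∀ t ∈ Ici (0 : ℝ), √2 * r t < H t := by
  have hsq : √2 ^ 2 = 2 := Real.sq_sqrt zero_le_two
  have hgap := pos_of_hasDerivAt_mul (x := fun t => H t - √2 * r t)
    (a := fun t => √2 / 2 * r t - H t)
    (fun t ht => ((hH t ht).sub ((hr t ht).const_mul √2)).congr_deriv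
      (by linear_combination (r t ^ 2 / 2) * hsq))
    ((continuousOn_const.mul (HasDerivAt.continuousOn hr)).sub (HasDerivAt.continuousOn hH))
    (sub_pos.2 hH0)
  exact fun t ht => sub_pos.1 (hgap t ht)

end Solution

/-- A global forward solution of `ṙ = -(3/2)rH`, `Ḣ = -r² - H²` starting with
`r(0) > 0` and `H(0) > √2 r(0)` converges to the origin as `t → ∞`. -/
theorem solution_tendsto_origin (r H : ℝ → ℝ)
    (hr : ∀ t ∈ Set.Ici (0 : ℝ), HasDerivAt r (-(3 / 2) * r t * H t) t)
    (hH : ∀ t ∈ Set.Ici (0 : ℝ), HasDerivAt H (-(r t) ^ 2 - (H t) ^ 2) t)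
    (hr0 : 0 < r 0) (hH0 : Real.sqrt 2 * r 0 < H 0) :
    Filter.Tendsto (fun t => (r t, H t)) Filter.atTop (nhds (0, 0)) := by
  have hr_pos := solution_r_pos hr hH hr0
  have hr_lt := solution_sqrt_two_mul_r_lt_H hr hH hH0
  have hH_pos : ∀ t ∈ Ici (0 : ℝ), 0 < H t := fun t ht =>
    (mul_pos (Real.sqrt_pos.2 two_pos) (hr_pos t ht)).trans (hr_lt t ht)
  have hH_lim : Tendsto H atTop (𝓝 0) :=
    tendsto_zero_of_hasDerivAt_le_neg_sq hH (fun t _ => by nlinarith [sq_nonneg (r t)]) hH_pos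
  have hr_lim : Tendsto r atTop (𝓝 0) := by
    refine tendsto_of_tendsto_of_tendsto_of_le_of_le' tendsto_const_nhds
      (by simpa using hH_lim.div_const √2) ?_ ?_
    · filter_upwards [eventually_ge_atTop 0] with t ht using (hr_pos t ht).le
    · filter_upwards [eventually_ge_atTop 0] with t ht
      rw [le_div_iff₀ (Real.sqrt_pos.2 two_pos), mul_comm]
      exact (hr_lt t ht).le
  exact hr_lim.prodMk_nhds hH_lim
end
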